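/- The normalizer of K in Aut(G) has order at most 2l·(q² − 1), where q = p^l for the prime p. -/
import Mathlib


/-- The Heisenberg group `H₃(F)` of upper unitriangular 3×3 matrices over `F`,
recorded by the three free entries: `x` in position (1,2), `y` in position (2,3),
`z` in position (1,3). -/
@[ext]
structure Heis (F : Type*) where
  x : F
  y : F
  z : F
deriving DecidableEq

namespace Heis

variable {F : Type*} [Field F]

/-- Multiplication corresponding to the matrix product. -/
instance : Group (Heis F) where
  mul a b := ⟨a.x + b.x, a.y + b.y, a.z + b.z + a.x * b.y⟩
  one := ⟨0, 0, 0⟩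
  inv a := ⟨-a.x, -a.y, -a.z + a.x * a.y⟩
  mul_assoc a b c := Heis.ext
    (show a.x + b.x + c.x = a.x + (b.x + c.x) by ring)
    (show a.y + b.y + c.y = a.y + (b.y + c.y) by ring)
    (show a.z + b.z + a.x * b.y + c.z + (a.x + b.x) * c.y
        = a.z + (b.z + c.z + b.x * c.y) + a.x * (b.y + c.y) by ring)
  one_mul a := Heis.ext
    (show (0 : F) + a.x = a.x by ring)
    (show (0 : F) + a.y = a.y by ring)
    (show (0 : F) + a.z + 0 * a.y = a.z by ring)
  mul_one a := Heis.ext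
    (show a.x + 0 = a.x by ring)
    (show a.y + 0 = a.y by ring)
    (show a.z + 0 + a.x * 0 = a.z by ring)
  inv_mul_cancel a := Heis.ext
    (show -a.x + a.x = 0 by ring)
    (show -a.y + a.y = 0 by ring)
    (show -a.z + a.x * a.y + a.z + -a.x * a.y = 0 by ring)

instance [Fintype F] : Fintype (Heis F) :=
  Fintype.ofEquiv (F × F × F)
    ⟨fun p => ⟨p.1, p.2.1, p.2.2⟩, fun a => (a.x, a.y, a.z), fun _ => rfl, fun _ => rfl⟩

end Heis

/-- The element `g(x,y,z)` of the Heisenberg group. -/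
def gElt {F : Type*} (x y z : F) : Heis F := ⟨x, y, z⟩

/-- The center `Z = {g(0,0,z) : z ∈ F}` of the Heisenberg group, as a set. -/
def Zset (F : Type*) [Field F] : Set (Heis F) := {g : Heis F | g.x = 0 ∧ g.y = 0}

/-- The center `Z` as a subgroup of the Heisenberg group. -/
def Zsub (F : Type*) [Field F] : Subgroup (Heis F) where
  carrier := Zset F
  mul_mem' := fun {a b} ha hb =>
    ⟨show a.x + b.x = 0 by rw [ha.1, hb.1, add_zero],
     show a.y + b.y = 0 by rw [ha.2, hb.2, add_zero]⟩
  one_mem' := ⟨rfl, rfl⟩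
  inv_mem' := fun {a} ha =>
    ⟨show -a.x = 0 by rw [ha.1, neg_zero],
     show -a.y = 0 by rw [ha.2, neg_zero]⟩

/-- `γ_i(α,β) = αβ/2 + (α² − εβ²)i`. -/
def gam {F : Type*} [Field F] (ε i α β : F) : F := α * β / 2 + (α ^ 2 - ε * β ^ 2) * i

/-- `Y_i = {g(α, β, γ_i(α,β)) : (α,β) ≠ (0,0)}`. -/
def Yset {F : Type*} [Field F] (ε i : F) : Set (Heis F) :=
  {g : Heis F | ∃ α β : F, (α, β) ≠ (0, 0) ∧ g = gElt α β (gam ε i α β)}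

/-- `X_i = Y_i ∪ {e}`. -/
def Xset {F : Type*} [Field F] (ε i : F) : Set (Heis F) := Yset ε i ∪ {1}

/-- The map `ρ(M) : G → G` attached to the matrix `M = [[α,β],[εβ,α]]`. -/
def rho {F : Type*} [Field F] (ε α β : F) : Heis F → Heis F := fun g =>
  gElt (α * g.x + ε * β * g.y) (β * g.x + α * g.y)
    (α * β * (g.x ^ 2 / 2 + ε * g.y ^ 2 / 2) + ε * β ^ 2 * g.x * g.y
      + (α ^ 2 - ε * β ^ 2) * g.z)

/-- `K = {ρ(M) : M = [[α,β],[εβ,α]], (α,β) ≠ (0,0)}`, as a set of maps `G → G`. -/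
def Kset {F : Type*} [Field F] (ε : F) : Set (Heis F → Heis F) :=
  {f | ∃ α β : F, (α, β) ≠ (0, 0) ∧ f = rho ε α β}

/-- The family of sets `{e}`, `Z \ {e}`, `Y_i` for `i ∈ F`. -/
def SFam {F : Type*} [Field F] (ε : F) : Set (Set (Heis F)) :=
  insert {1} (insert (Zset F \ {1}) {S | ∃ i : F, S = Yset ε i})

/-- `f` preserves each of the basic sets `{e}`, `Z \ {e}`, `Y_i`:
`hg⁻¹ ∈ S ↔ f(h)f(g)⁻¹ ∈ S`. -/
def Preserves {F : Type*} [Field F] (ε : F) (f : Heis F → Heis F) : Prop :=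
  ∀ S ∈ SFam ε, ∀ g h : Heis F, h * g⁻¹ ∈ S ↔ f h * (f g)⁻¹ ∈ S

/-- The set of permutations of `G` of the form `x ↦ σ(x)·c` with `σ ∈ K`, `c ∈ G`. -/
def Aset {F : Type*} [Field F] (ε : F) : Set (Equiv.Perm (Heis F)) :=
  {f | ∃ σ ∈ Kset ε, ∃ c : Heis F, ∀ x : Heis F, f x = σ x * c}

/-- The operation `ψ` on `F ∪ {∞}`, with `∞` encoded as `none`. -/
def psi {F : Type*} [Field F] [DecidableEq F] (ε : F) : Option F → Option F → Option F
  | none, j => j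
  | some i, none => some i
  | some i, some j => if i + j = 0 then none else some ((i * j + ε / 16) / (i + j))

/-- `Y_k` for `k ∈ F ∪ {∞}`, where `Y_∞ = Z \ {e}`. -/
def YInf {F : Type*} [Field F] (ε : F) : Option F → Set (Heis F)
  | some i => Yset ε i
  | none => Zset F \ {1}

-- ============ Epair ============
@[ext]
structure Epair (F : Type*) (ε : F) where
  a : F
  b : F
deriving DecidableEq

namespace Epair

variable {F : Type*} [Field F] {ε : F}

instance : Zero (Epair F ε) := ⟨⟨0, 0⟩⟩
instance : One (Epair F ε) := ⟨⟨1, 0⟩⟩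
instance : Add (Epair F ε) := ⟨fun u v => ⟨u.a + v.a, u.b + v.b⟩⟩
instance : Neg (Epair F ε) := ⟨fun u => ⟨-u.a, -u.b⟩⟩
instance : Mul (Epair F ε) := ⟨fun u v => ⟨u.a * v.a + ε * u.b * v.b, u.a * v.b + u.b * v.a⟩⟩

@[simp] lemma mul_a (u v : Epair F ε) : (u * v).a = u.a * v.a + ε * u.b * v.b := rfl
@[simp] lemma mul_b (u v : Epair F ε) : (u * v).b = u.a * v.b + u.b * v.a := rfl
@[simp] lemma add_a (u v : Epair F ε) : (u + v).a = u.a + v.a := rfl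
@[simp] lemma add_b (u v : Epair F ε) : (u + v).b = u.b + v.b := rfl
@[simp] lemma neg_a (u : Epair F ε) : (-u).a = -u.a := rfl
@[simp] lemma neg_b (u : Epair F ε) : (-u).b = -u.b := rfl
@[simp] lemma zero_a : (0 : Epair F ε).a = 0 := rfl
@[simp] lemma zero_b : (0 : Epair F ε).b = 0 := rfl
@[simp] lemma one_a : (1 : Epair F ε).a = 1 := rfl
@[simp] lemma one_b : (1 : Epair F ε).b = 0 := rfl

instance : CommRing (Epair F ε) where
  add_assoc u v w := by ext <;> simp <;> ring
  zero_add u := by ext <;> simp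
  add_zero u := by ext <;> simp
  add_comm u v := by ext <;> simp <;> ring
  neg_add_cancel u := by ext <;> simp
  nsmul := nsmulRec
  zsmul := zsmulRec
  mul_assoc u v w := by ext <;> simp <;> ring
  one_mul u := by ext <;> simp
  mul_one u := by ext <;> simp
  left_distrib u v w := by ext <;> simp <;> ring
  right_distrib u v w := by ext <;> simp <;> ring
  mul_comm u v := by ext <;> simp <;> ring
  zero_mul u := by ext <;> simp
  mul_zero u := by ext <;> simp

lemma norm_ne_zero (hε : ¬IsSquare ε) {u : Epair F ε} (hu : u ≠ 0) :
    u.a ^ 2 - ε * u.b ^ 2 ≠ 0 := by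
  intro h
  rcases eq_or_ne u.b 0 with hb | hb
  · apply hu
    have : u.a ^ 2 = 0 := by rw [← h, hb]; ring
    have ha : u.a = 0 := pow_eq_zero_iff (n := 2) (by norm_num) |>.mp this
    ext <;> simp [ha, hb]
  · refine hε ⟨u.a / u.b, ?_⟩
    field_simp
    linear_combination -h

lemma isField (hε : ¬IsSquare ε) : IsField (Epair F ε) where
  exists_pair_ne := ⟨0, 1, by intro h; simpa using congrArg Epair.a h⟩
  mul_comm := mul_comm
  mul_inv_cancel {u} hu := by
    refine ⟨⟨u.a / (u.a ^ 2 - ε * u.b ^ 2), -u.b / (u.a ^ 2 - ε * u.b ^ 2)⟩, ?_⟩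
    have hN := norm_ne_zero hε hu
    ext <;> simp <;> field_simp <;> ring

lemma mul_right_cancel (hε : ¬IsSquare ε) {w : Epair F ε} (hw : w ≠ 0)
    {u v : Epair F ε} (h : u * w = v * w) : u = v := by
  obtain ⟨w', hw'⟩ := (isField hε).mul_inv_cancel hw
  have := congrArg (· * w') h
  simpa [mul_assoc, hw'] using this

lemma mul_ne_zero' (hε : ¬IsSquare ε) {u v : Epair F ε} (hu : u ≠ 0) (hv : v ≠ 0) :
    u * v ≠ 0 := by
  intro h
  obtain ⟨v', hv'⟩ := (isField hε).mul_inv_cancel hv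
  apply hu
  calc u = u * (v * v') := by rw [hv', mul_one]
    _ = (u * v) * v' := by rw [mul_assoc]
    _ = 0 := by rw [h, zero_mul]

instance [Fintype F] : Fintype (Epair F ε) :=
  Fintype.ofEquiv (F × F) ⟨fun p => ⟨p.1, p.2⟩, fun u => (u.a, u.b), fun _ => rfl, fun _ => rfl⟩

lemma card_eq [Fintype F] : Fintype.card (Epair F ε) = Fintype.card F ^ 2 := by
  have : Fintype.card (Epair F ε) = Fintype.card (F × F) := Fintype.card_congr
    ⟨fun u => (u.a, u.b), fun p => ⟨p.1, p.2⟩, fun _ => rfl, fun _ => rfl⟩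
  rw [this, Fintype.card_prod, sq]

/-- The inclusion of `F` into `Epair F ε`. -/
def incl : F →+* Epair F ε where
  toFun x := ⟨x, 0⟩
  map_one' := rfl
  map_mul' x y := by ext <;> simp
  map_zero' := rfl
  map_add' x y := by ext <;> simp

lemma charP (p : ℕ) [CharP F p] : CharP (Epair F ε) p :=
  charP_of_injective_ringHom (f := (incl : F →+* Epair F ε))
    (fun x y h => by simpa [incl] using congrArg Epair.a h) p

end Epair

-- ============ Heis helpers ============
namespace Heis

variable {F : Type*} [Field F]

@[simp] lemma mul_x (a b : Heis F) : (a * b).x = a.x + b.x := rfl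
@[simp] lemma mul_y (a b : Heis F) : (a * b).y = a.y + b.y := rfl
@[simp] lemma mul_z (a b : Heis F) : (a * b).z = a.z + b.z + a.x * b.y := rfl
@[simp] lemma one_x : (1 : Heis F).x = 0 := rfl
@[simp] lemma one_y : (1 : Heis F).y = 0 := rfl
@[simp] lemma one_z : (1 : Heis F).z = 0 := rfl
@[simp] lemma inv_x (a : Heis F) : (a⁻¹).x = -a.x := rfl
@[simp] lemma inv_y (a : Heis F) : (a⁻¹).y = -a.y := rfl
@[simp] lemma inv_z (a : Heis F) : (a⁻¹).z = -a.z + a.x * a.y := rfl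

lemma central_comm {g : Heis F} (hx : g.x = 0) (hy : g.y = 0) (a : Heis F) :
    g * a = a * g := by
  ext <;> simp [hx, hy] <;> ring

lemma central_map (τ : Heis F ≃* Heis F) {g : Heis F} (hx : g.x = 0) (hy : g.y = 0) :
    (τ g).x = 0 ∧ (τ g).y = 0 := by
  have hcomm : ∀ a, τ g * a = a * τ g := by
    intro a
    have : τ g * τ (τ.symm a) = τ (τ.symm a) * τ g := by
      rw [← map_mul, ← map_mul, central_comm hx hy]
    simpa using this
  constructor
  · have := congrArg Heis.z (hcomm ⟨0, 1, 0⟩)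
    simpa using this
  · have := congrArg Heis.z (hcomm ⟨1, 0, 0⟩)
    simpa using this

end Heis

-- ============ pi, gE, tauBar ============
section Bridge

variable {F : Type*} [Field F] (ε : F)

/-- Projection to the abelianization, with values in `Epair F ε`. -/
def piE (g : Heis F) : Epair F ε := ⟨g.x, g.y⟩

/-- Section of `piE`. -/
def gE (v : Epair F ε) : Heis F := ⟨v.a, v.b, 0⟩

@[simp] lemma piE_gE (v : Epair F ε) : piE ε (gE ε v) = v := rfl

@[simp] lemma piE_mul (g h : Heis F) : piE ε (g * h) = piE ε g + piE ε h := rfl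

@[simp] lemma piE_one : piE ε (1 : Heis F) = 0 := rfl

lemma piE_rho (α β : F) (g : Heis F) :
    piE ε (rho ε α β g) = (⟨α, β⟩ : Epair F ε) * piE ε g := by
  ext <;> simp [rho, gElt, piE] <;> ring

/-- The induced map on the abelianization. -/
def tauBar (τ : Heis F ≃* Heis F) (v : Epair F ε) : Epair F ε := piE ε (τ (gE ε v))

lemma piE_tau (τ : Heis F ≃* Heis F) (g : Heis F) :
    piE ε (τ g) = tauBar ε τ (piE ε g) := by
  have hdecomp : g = gE ε (piE ε g) * (⟨0, 0, g.z⟩ : Heis F) := by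
    ext <;> simp [gE, piE]
  have hc := Heis.central_map τ (g := (⟨0, 0, g.z⟩ : Heis F)) rfl rfl
  calc piE ε (τ g) = piE ε (τ (gE ε (piE ε g)) * τ ⟨0, 0, g.z⟩) := by rw [← map_mul, ← hdecomp]
    _ = tauBar ε τ (piE ε g) + piE ε (τ ⟨0, 0, g.z⟩) := by rw [piE_mul]; rfl
    _ = tauBar ε τ (piE ε g) := by
        have : piE ε (τ (⟨0, 0, g.z⟩ : Heis F)) = 0 := by
          ext
          · exact hc.1
          · exact hc.2
        rw [this, add_zero]

lemma tauBar_add (τ : Heis F ≃* Heis F) (u v : Epair F ε) :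
    tauBar ε τ (u + v) = tauBar ε τ u + tauBar ε τ v := by
  have h1 : piE ε (gE ε u * gE ε v) = u + v := by simp
  have := piE_tau ε τ (gE ε u * gE ε v)
  rw [h1] at this
  rw [← this, map_mul, piE_mul]
  rfl

@[simp] lemma tauBar_zero (τ : Heis F ≃* Heis F) : tauBar ε τ 0 = 0 := by
  have : gE ε (0 : Epair F ε) = (1 : Heis F) := by ext <;> simp [gE]
  simp [tauBar, this]

lemma tauBar_injective (τ : Heis F ≃* Heis F) : Function.Injective (tauBar ε τ) := by
  intro u v huv
  have hzero : ∀ w : Epair F ε, tauBar ε τ w = 0 → w = 0 := by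
    intro w hw
    have hxy : (τ (gE ε w)).x = 0 ∧ (τ (gE ε w)).y = 0 := by
      constructor
      · exact congrArg Epair.a hw
      · exact congrArg Epair.b hw
    have := Heis.central_map τ.symm hxy.1 hxy.2
    rw [MulEquiv.symm_apply_apply] at this
    ext
    · exact this.1
    · exact this.2
  have hsub : tauBar ε τ (u - v) + tauBar ε τ v = tauBar ε τ u := by
    rw [← tauBar_add, sub_add_cancel]
  rw [huv] at hsub
  have : tauBar ε τ (u - v) = 0 := by
    have := add_right_cancel (b := tauBar ε τ v) (by rw [hsub, zero_add] : tauBar ε τ (u - v) + tauBar ε τ v = 0 + tauBar ε τ v)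
    exact this
  have := hzero _ this
  exact sub_eq_zero.mp this

end Bridge

-- ============ counting lemma ============
open Polynomial in
lemma card_ringAut_le (E : Type*) [Field E] [Fintype E] (p n : ℕ) (hp : p.Prime)
    (hn : 0 < n) (hcard : Fintype.card E = p ^ n) : Nat.card (E ≃+* E) ≤ n := by
  classical
  have hchar : CharP E p := by
    have h1 : CharP E (ringChar E) := ringChar.charP E
    obtain ⟨m, hr, hcard'⟩ := FiniteField.card E (ringChar E)
    have hpr : p = ringChar E := by
      have hdvd : p ∣ ringChar E ^ (m : ℕ) := by
        rw [← hcard', hcard]; exact dvd_pow_self p hn.ne'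
      exact (Nat.prime_dvd_prime_iff_eq hp hr).mp (hp.dvd_of_dvd_pow hdvd)
    rwa [hpr]
  letI : Algebra (ZMod p) E := ZMod.algebra E p
  haveI : Fact p.Prime := ⟨hp⟩
  haveI : FiniteDimensional (ZMod p) E := Module.Finite.of_finite
  have hfr : Module.finrank (ZMod p) E = n := by
    have := Module.card_eq_pow_finrank (K := ZMod p) (V := E)
    rw [ZMod.card, hcard] at this
    exact (Nat.pow_right_injective hp.two_le this.symm)
  obtain ⟨ζ, hζ⟩ := IsCyclic.exists_generator (α := Eˣ)
  set t : E := (ζ : E) with ht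
  have hinj : Function.Injective (fun f : E ≃+* E => f t) := by
    intro f g hfg
    ext x
    rcases eq_or_ne x 0 with rfl | hx
    · simp
    · obtain ⟨k, hk⟩ := mem_powers_iff_mem_zpowers.mpr (hζ (Units.mk0 x hx))
      have hxk : x = t ^ k := by
        have := congrArg Units.val hk
        simpa using this.symm
      simp only at hfg
      rw [hxk, map_pow, map_pow, hfg]
  have hint : IsIntegral (ZMod p) t := IsIntegral.of_finite (ZMod p) t
  set m : (ZMod p)[X] := minpoly (ZMod p) t with hm
  have hroot : ∀ f : E ≃+* E, f t ∈ m.aroots E := by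
    intro f
    have hcomm : ∀ x : ZMod p, f (algebraMap (ZMod p) E x) = algebraMap (ZMod p) E x := by
      intro x
      exact RingHom.congr_fun
        (RingHom.ext_zmod (f.toRingHom.comp (algebraMap (ZMod p) E)) (algebraMap (ZMod p) E)) x
    let fa : E →ₐ[ZMod p] E := { f.toRingHom with commutes' := hcomm }
    have : aeval (f t) m = 0 := by
      have h2 := Polynomial.aeval_algHom_apply fa t m
      have h3 : fa t = f t := rfl
      rw [h3] at h2
      rw [h2, minpoly.aeval, map_zero]
    rw [Polynomial.mem_aroots]
    exact ⟨minpoly.ne_zero hint, this⟩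
  have hle : Nat.card (E ≃+* E) ≤ (m.aroots E).toFinset.card := by
    have h5 : Function.Injective (fun f : E ≃+* E =>
        (⟨f t, Multiset.mem_toFinset.mpr (hroot f)⟩ : {x // x ∈ (m.aroots E).toFinset})) := by
      intro f g hfg
      exact hinj (congrArg Subtype.val hfg)
    calc Nat.card (E ≃+* E) ≤ Nat.card {x // x ∈ (m.aroots E).toFinset} :=
          Nat.card_le_card_of_injective _ h5
      _ = (m.aroots E).toFinset.card := by rw [Nat.card_eq_fintype_card, Fintype.card_coe]
  refine hle.trans ?_
  calc (m.aroots E).toFinset.card ≤ Multiset.card (m.aroots E) := Multiset.toFinset_card_le _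
    _ ≤ m.natDegree := by
        rw [Polynomial.aroots]
        exact (Polynomial.card_roots' _).trans (le_of_eq (Polynomial.natDegree_map _))
    _ ≤ Module.finrank (ZMod p) E := minpoly.natDegree_le t
    _ = n := hfr


/-- The normalizer of `K` in `Aut(G)` has order at most `2l·(q² − 1)`,
where `q = p^l` for the prime `p`. -/
theorem statement_15 {F : Type*} [Field F] [Fintype F] (p l : ℕ) (hp : p.Prime)
    (hl : 0 < l) (hq : Fintype.card F = p ^ l)
    (hodd : Odd (Fintype.card F)) (ε : F) (hε : ¬IsSquare ε) :
    Nat.card {τ : MulAut (Heis F) |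
        ∀ σ : Heis F → Heis F, σ ∈ Kset ε ↔ (⇑τ ∘ σ ∘ ⇑τ.symm) ∈ Kset ε}
      ≤ 2 * l * (Fintype.card F ^ 2 - 1) := by
  classical
  have h2 : (2 : F) ≠ 0 := by
    intro h20
    have hdvd : ringChar F ∣ 2 := (CharP.cast_eq_zero_iff F (ringChar F) 2).mp (by exact_mod_cast h20)
    rcases (Nat.dvd_prime Nat.prime_two).mp hdvd with h | h
    · exact CharP.ringChar_ne_one h
    · have := FiniteField.even_card_of_char_two h
      rw [Nat.odd_iff] at hodd
      omega
  have hone : (1 : Epair F ε) ≠ 0 := fun h => one_ne_zero (congrArg Epair.a h)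
  -- extraction of the conjugation data
  have hExtract : ∀ τ : MulAut (Heis F),
      (∀ σ : Heis F → Heis F, σ ∈ Kset ε ↔ (⇑τ ∘ σ ∘ ⇑τ.symm) ∈ Kset ε) →
      ∀ v : Epair F ε, v ≠ 0 →
      ∃ w : Epair F ε, w ≠ 0 ∧ ∀ g, τ (rho ε v.a v.b g) = rho ε w.a w.b (τ g) := by
    intro τ hτ v hv
    have hmem : rho ε v.a v.b ∈ Kset ε := by
      refine ⟨v.a, v.b, ?_, rfl⟩
      intro hpair
      apply hv
      ext
      · exact congrArg Prod.fst hpair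
      · exact congrArg Prod.snd hpair
    obtain ⟨α', β', hne, heq⟩ := (hτ _).mp hmem
    refine ⟨⟨α', β'⟩, ?_, ?_⟩
    · intro h0
      exact hne (by rw [show α' = 0 from congrArg Epair.a h0, show β' = 0 from congrArg Epair.b h0])
    · intro g
      have := congrFun heq (τ g)
      simpa using this
  -- the key multiplicative identity
  have hkey : ∀ (τ : MulAut (Heis F)) (v w : Epair F ε),
      (∀ g, τ (rho ε v.a v.b g) = rho ε w.a w.b (τ g)) →
      ∀ u : Epair F ε, tauBar ε τ (v * u) = w * tauBar ε τ u := by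
    intro τ v w h u
    have h1 := congrArg (piE ε) (h (gE ε u))
    simp only [piE_tau, piE_rho, piE_gE] at h1
    exact h1
  have htBar_one_ne : ∀ τ : MulAut (Heis F), tauBar ε τ 1 ≠ 0 := by
    intro τ h
    exact hone (tauBar_injective ε τ (by rw [h, tauBar_zero]))
  -- existence of the invariants
  have hmain : ∀ τ : MulAut (Heis F),
      (∀ σ : Heis F → Heis F, σ ∈ Kset ε ↔ (⇑τ ∘ σ ∘ ⇑τ.symm) ∈ Kset ε) →
      ∃ (e : Epair F ε ≃+* Epair F ε) (w : {w : Epair F ε // w ≠ 0}),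
        ∀ v, tauBar ε τ v = e v * (w : Epair F ε) := by
    intro τ hτ
    choose θ hθne hθeq using fun v hv => hExtract τ hτ v hv
    let θ' : Epair F ε → Epair F ε := fun v => if h : v = 0 then 0 else θ v h
    have hθ'ne : ∀ v (h : v ≠ 0), θ' v = θ v h := fun v h => dif_neg h
    have hzeroθ : θ' 0 = 0 := dif_pos rfl
    have key : ∀ v u, tauBar ε τ (v * u) = θ' v * tauBar ε τ u := by
      intro v u
      by_cases h : v = 0
      · subst h
        rw [zero_mul, tauBar_zero, hzeroθ, zero_mul]
      · rw [hθ'ne v h]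
        exact hkey τ v (θ v h) (hθeq v h) u
    set t1 := tauBar ε τ 1 with ht1
    have ht1ne : t1 ≠ 0 := htBar_one_ne τ
    have key1 : ∀ v, tauBar ε τ v = θ' v * t1 := by
      intro v
      have := key v 1
      rwa [mul_one] at this
    have hmul : ∀ u v, θ' (u * v) = θ' u * θ' v := by
      intro u v
      apply Epair.mul_right_cancel hε ht1ne
      rw [← key1 (u * v), key u v, key1 v, mul_assoc]
    have hadd : ∀ u v, θ' (u + v) = θ' u + θ' v := by
      intro u v
      apply Epair.mul_right_cancel hε ht1ne
      rw [← key1 (u + v), tauBar_add, key1 u, key1 v, add_mul]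
    have honeθ : θ' 1 = 1 := by
      apply Epair.mul_right_cancel hε ht1ne
      rw [← key1 1, one_mul]
    have hinj : Function.Injective θ' := by
      intro u v huv
      apply tauBar_injective ε τ
      rw [key1 u, key1 v, huv]
    have hbij : Function.Bijective θ' := Finite.injective_iff_bijective.mp hinj
    refine ⟨RingEquiv.ofBijective
      ({ toFun := θ', map_one' := honeθ, map_mul' := hmul, map_zero' := hzeroθ,
         map_add' := hadd } : Epair F ε →+* Epair F ε)
      hbij, ⟨t1, ht1ne⟩, ?_⟩
    intro v
    rw [key1 v]
    rfl
  -- uniqueness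
  have huniq : ∀ τ₁ τ₂ : MulAut (Heis F),
      (∀ σ : Heis F → Heis F, σ ∈ Kset ε ↔ (⇑τ₁ ∘ σ ∘ ⇑τ₁.symm) ∈ Kset ε) →
      (∀ σ : Heis F → Heis F, σ ∈ Kset ε ↔ (⇑τ₂ ∘ σ ∘ ⇑τ₂.symm) ∈ Kset ε) →
      (∀ v, tauBar ε τ₁ v = tauBar ε τ₂ v) → τ₁ = τ₂ := by
    intro τ₁ τ₂ hτ₁ hτ₂ heqbar
    set v2 : Epair F ε := ⟨2, 0⟩ with hv2
    have hv2ne : v2 ≠ 0 := fun h => h2 (congrArg Epair.a h)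
    obtain ⟨w1, hw1ne, hw1⟩ := hExtract τ₁ hτ₁ v2 hv2ne
    obtain ⟨w2, hw2ne, hw2⟩ := hExtract τ₂ hτ₂ v2 hv2ne
    have hw12 : w1 = w2 := by
      have e1 := hkey τ₁ v2 w1 hw1 1
      have e2 := hkey τ₂ v2 w2 hw2 1
      rw [heqbar, heqbar] at e1
      rw [e2] at e1
      exact Epair.mul_right_cancel hε (htBar_one_ne τ₂) e1.symm
    subst hw12
    set s : Heis F → Heis F := fun g => τ₂.symm (τ₁ g) with hs
    have hs_pi : ∀ g, piE ε (s g) = piE ε g := by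
      intro g
      apply tauBar_injective ε τ₂
      rw [← piE_tau, ← piE_tau]
      show piE ε (τ₂ (τ₂.symm (τ₁ g))) = piE ε (τ₂ g)
      rw [MulEquiv.apply_symm_apply, piE_tau, piE_tau, heqbar]
    have hs_mul : ∀ g h', s (g * h') = s g * s h' := by
      intro g h'
      show τ₂.symm (τ₁ (g * h')) = _
      rw [map_mul, map_mul]
    have hrho_conv1 : rho ε v2.a v2.b = rho ε (2 : F) 0 := rfl
    rw [hrho_conv1] at hw1 hw2
    have hs_rho : ∀ g, s (rho ε 2 0 g) = rho ε 2 0 (s g) := by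
      intro g
      have hb : ∀ h', τ₂.symm (rho ε w1.a w1.b h') = rho ε 2 0 (τ₂.symm h') := by
        intro h'
        have := hw2 (τ₂.symm h')
        rw [MulEquiv.apply_symm_apply] at this
        rw [← this, MulEquiv.symm_apply_apply]
      calc s (rho ε 2 0 g) = τ₂.symm (rho ε w1.a w1.b (τ₁ g)) := by
            show τ₂.symm (τ₁ (rho ε 2 0 g)) = _
            rw [hw1 g]
        _ = rho ε 2 0 (τ₂.symm (τ₁ g)) := hb _
        _ = rho ε 2 0 (s g) := rfl
    set D : Heis F → F := fun g => (s g).z - g.z with hD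
    have hsg_x : ∀ g : Heis F, (s g).x = g.x := fun g => congrArg Epair.a (hs_pi g)
    have hsg_y : ∀ g : Heis F, (s g).y = g.y := fun g => congrArg Epair.b (hs_pi g)
    have hsg_z : ∀ g : Heis F, (s g).z = g.z + D g := by
      intro g
      show (s g).z = g.z + ((s g).z - g.z)
      ring
    have hs_eq : ∀ g : Heis F, s g = ⟨g.x, g.y, g.z + D g⟩ := by
      intro g
      ext
      · exact hsg_x g
      · exact hsg_y g
      · exact hsg_z g
    have hD_mul : ∀ g h', D (g * h') = D g + D h' := by
      intro g h'
      show (s (g * h')).z - (g * h').z = ((s g).z - g.z) + ((s h').z - h'.z)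
      rw [hs_mul, Heis.mul_z, Heis.mul_z, hsg_x g, hsg_y h']
      ring
    have hD_one : D 1 = 0 := by
      have hh : s 1 = 1 := by
        show τ₂.symm (τ₁ 1) = 1
        rw [map_one, map_one]
      show (s 1).z - (1 : Heis F).z = 0
      rw [hh, sub_self]
    have hD_inv : ∀ g : Heis F, D g⁻¹ = -D g := by
      intro g
      have h' := hD_mul g g⁻¹
      rw [mul_inv_cancel, hD_one] at h'
      linear_combination -h'
    have hD_central : ∀ u : F, D (⟨0, 0, u⟩ : Heis F) = 0 := by
      intro u
      have hcomm : (⟨0, 0, u⟩ : Heis F)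
          = ⟨1, 0, 0⟩ * ⟨0, u, 0⟩ * (⟨1, 0, 0⟩ : Heis F)⁻¹ * (⟨0, u, 0⟩ : Heis F)⁻¹ := by
        ext <;> simp
      rw [hcomm, hD_mul, hD_mul, hD_mul, hD_inv, hD_inv]
      ring
    have hrho2 : ∀ g : Heis F, rho ε 2 0 g = ⟨2 * g.x, 2 * g.y, 4 * g.z⟩ := by
      intro g
      exact Heis.ext (show 2 * g.x + ε * 0 * g.y = 2 * g.x by ring)
        (show 0 * g.x + 2 * g.y = 2 * g.y by ring)
        (show 2 * 0 * (g.x ^ 2 / 2 + ε * g.y ^ 2 / 2) + ε * 0 ^ 2 * g.x * g.y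
            + (2 ^ 2 - ε * 0 ^ 2) * g.z = 4 * g.z by ring)
    have hDzero : ∀ g, D g = 0 := by
      intro g
      have hA : D (rho ε 2 0 g) = 4 * D g := by
        have hzz := congrArg Heis.z (hs_rho g)
        rw [hsg_z (rho ε 2 0 g)] at hzz
        have hr1 : (rho ε 2 0 g).z = 4 * g.z := by rw [hrho2]
        have hr2 : (rho ε 2 0 (s g)).z = 4 * (s g).z := by rw [hrho2]
        rw [hr1, hr2, hsg_z g] at hzz
        linear_combination hzz
      have hB : D (rho ε 2 0 g) = 2 * D g := by
        have hdec : rho ε 2 0 g = g * g * (⟨0, 0, 2 * g.z - g.x * g.y⟩ : Heis F) := by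
          rw [hrho2]
          ext <;> simp <;> ring
        rw [hdec, hD_mul, hD_mul, hD_central]
        ring
      have h2D : 2 * D g = 0 := by linear_combination hB - hA
      rcases mul_eq_zero.mp h2D with h | h
      · exact absurd h h2
      · exact h
    have hsid : ∀ g, s g = g := by
      intro g
      rw [hs_eq g, hDzero g]
      ext <;> simp
    refine MulEquiv.ext fun g => ?_
    have hg := hsid g
    calc τ₁ g = τ₂ (τ₂.symm (τ₁ g)) := (MulEquiv.apply_symm_apply τ₂ _).symm
      _ = τ₂ g := by rw [show τ₂.symm (τ₁ g) = g from hg]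
  -- final counting
  haveI hFin : Finite (Epair F ε ≃+* Epair F ε) :=
    Finite.of_injective (fun f => (f : Epair F ε → Epair F ε))
      (fun f g h => RingEquiv.ext (congrFun h))
  have hAut : Nat.card (Epair F ε ≃+* Epair F ε) ≤ 2 * l := by
    letI : Field (Epair F ε) := (Epair.isField hε).toField
    refine card_ringAut_le (Epair F ε) p (2 * l) hp (by positivity) ?_
    rw [Epair.card_eq, hq, ← pow_mul, mul_comm l 2]
  have hNZ : Nat.card {w : Epair F ε // w ≠ 0} = Fintype.card F ^ 2 - 1 := by
    rw [Nat.card_eq_fintype_card]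
    have hcompl : Fintype.card {w : Epair F ε // w ≠ 0}
        = Fintype.card (Epair F ε) - Fintype.card {w : Epair F ε // w = 0} :=
      Fintype.card_subtype_compl _
    rw [hcompl, Epair.card_eq, Fintype.card_subtype_eq (0 : Epair F ε)]
  choose eF wF hF using fun τ : {τ : MulAut (Heis F) //
      ∀ σ : Heis F → Heis F, σ ∈ Kset ε ↔ (⇑τ.1 ∘ σ ∘ ⇑τ.1.symm) ∈ Kset ε} => hmain τ.1 τ.2
  have hinj : Function.Injective (fun τ => (eF τ, wF τ)) := by
    intro τ₁ τ₂ hh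
    have he : eF τ₁ = eF τ₂ := congrArg Prod.fst hh
    have hw : wF τ₁ = wF τ₂ := congrArg Prod.snd hh
    apply Subtype.ext
    apply huniq _ _ τ₁.2 τ₂.2
    intro v
    rw [hF τ₁ v, hF τ₂ v, he, hw]
  calc Nat.card {τ : MulAut (Heis F) |
        ∀ σ : Heis F → Heis F, σ ∈ Kset ε ↔ (⇑τ ∘ σ ∘ ⇑τ.symm) ∈ Kset ε}
      ≤ Nat.card ((Epair F ε ≃+* Epair F ε) × {w : Epair F ε // w ≠ 0}) :=
        Nat.card_le_card_of_injective _ hinj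
    _ = Nat.card (Epair F ε ≃+* Epair F ε) * Nat.card {w : Epair F ε // w ≠ 0} :=
        Nat.card_prod _ _
    _ ≤ 2 * l * (Fintype.card F ^ 2 - 1) := by
        rw [hNZ]
        exact Nat.mul_le_mul_right _ hAut
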